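/- Let ℓ ≥ 3 be an odd integer, and for each n let δ_di(ℓ, n) denote the smallest integer d such that every digraph on n vertices with minimum semidegree at least d contains an ℓ-cycle. Then δ_di(ℓ, n)/n tends to 1/2 as n tends to infinity. -/

import Mathlib

/-- An oriented graph: a digraph (relation) with no loops and no pair of
antiparallel edges. -/
def IsOrientedGraph {V : Type*} (E : V → V → Prop) : Prop :=
  ∀ x y, E x y → ¬ E y x

/-- The outdegree `d⁺(x)` of a vertex. -/
noncomputable def outDeg {V : Type*} (E : V → V → Prop) (x : V) : ℕ :=
  Nat.card {y // E x y}

/-- The indegree `d⁻(x)` of a vertex. -/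
noncomputable def inDeg {V : Type*} (E : V → V → Prop) (x : V) : ℕ :=
  Nat.card {y // E y x}

/-- The minimum semidegree `δ⁰(G) = min over x of min (d⁺(x), d⁻(x))`. -/
noncomputable def minSemidegree {V : Type*} (E : V → V → Prop) : ℕ :=
  sInf (Set.range fun x => min (outDeg E x) (inDeg E x))

/-- The minimum outdegree `δ⁺(G)`. -/
noncomputable def minOutdegree {V : Type*} (E : V → V → Prop) : ℕ :=
  sInf (Set.range fun x => outDeg E x)

/-- `G` contains a directed cycle of length `ℓ`: distinct vertices
`v₀, …, v_{ℓ-1}` (indexed cyclically) with all consecutive edges present. -/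
def HasCycle {V : Type*} (E : V → V → Prop) (ℓ : ℕ) : Prop :=
  ∃ v : ZMod ℓ → V, Function.Injective v ∧ ∀ i, E (v i) (v (i + 1))

/-- `G` contains a directed `ℓ`-cycle through the vertex `u`. -/
def HasCycleThrough {V : Type*} (E : V → V → Prop) (ℓ : ℕ) (u : V) : Prop :=
  ∃ v : ZMod ℓ → V, Function.Injective v ∧ (∀ i, E (v i) (v (i + 1))) ∧ ∃ i, v i = u

/-- `δ_di(ℓ, n)`: the smallest `d` such that every digraph (loopless relation)
on `n` vertices with minimum semidegree at least `d` contains an `ℓ`-cycle. -/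
noncomputable def deltaDi (ℓ n : ℕ) : ℕ :=
  sInf {d : ℕ | ∀ E : Fin n → Fin n → Prop, (∀ x, ¬ E x x) →
    d ≤ minSemidegree E → HasCycle E ℓ}

/-!
Upper bound: if `2 δ⁰(G) ≥ |V| + ℓ`, greedily grow a path on `ℓ - 1` vertices (each vertex has
more out-neighbours than the path has vertices); the out-neighbourhood of its last vertex and
the in-neighbourhood of its first vertex share at least `2 δ⁰ - |V| ≥ ℓ` vertices, so one of them
lies off the path and closes an `ℓ`-cycle. Hence `δ_di(ℓ, n) ≤ ⌊n/2⌋ + ℓ`.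

Lower bound: the balanced complete bipartite digraph on `n` vertices has `δ⁰ = ⌊n/2⌋` and, being
properly 2-coloured, no cycle of odd length. Hence `δ_di(ℓ, n) > ⌊n/2⌋`.
-/

open Filter Topology

section Digraph

variable {V : Type*} {E : V → V → Prop}

lemma outDeg_eq_ncard (x : V) : outDeg E x = {y | E x y}.ncard :=
  Nat.card_coe_set_eq _

lemma inDeg_eq_ncard (x : V) : inDeg E x = {y | E y x}.ncard :=
  Nat.card_coe_set_eq _

lemma minSemidegree_le_outDeg (x : V) : minSemidegree E ≤ outDeg E x :=
  (Nat.sInf_le (Set.mem_range_self x)).trans (min_le_left _ _)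

lemma minSemidegree_le_inDeg (x : V) : minSemidegree E ≤ inDeg E x :=
  (Nat.sInf_le (Set.mem_range_self x)).trans (min_le_right _ _)

lemma le_minSemidegree [Nonempty V] {d : ℕ} (h : ∀ x, d ≤ outDeg E x ∧ d ≤ inDeg E x) :
    d ≤ minSemidegree E :=
  le_csInf (Set.range_nonempty _) (by rintro _ ⟨x, rfl⟩; exact le_min (h x).1 (h x).2)

lemma minSemidegree_of_isEmpty [IsEmpty V] : minSemidegree E = 0 := by
  simp [minSemidegree, Set.range_eq_empty]

lemma exists_mem_notMem_range {m : ℕ} {w : Fin m → V} (hw : Function.Injective w) {s : Set V}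
    (hs : m < s.ncard) : ∃ y ∈ s, y ∉ Set.range w :=
  Set.exists_mem_notMem_of_ncard_lt_ncard (by rwa [Set.ncard_range_of_injective hw, Nat.card_fin])

lemma exists_injective_path [Finite V] [Nonempty V] :
    ∀ {k : ℕ}, (∀ x, k < outDeg E x) →
      ∃ w : Fin (k + 1) → V, Function.Injective w ∧ ∀ i : Fin k, E (w i.castSucc) (w i.succ)
  | 0, _ =>
    ⟨fun _ => Classical.arbitrary V, fun a b _ => Subsingleton.elim (α := Fin 1) a b, Fin.elim0⟩
  | k + 1, h => by
    obtain ⟨w, hw, hpath⟩ := exists_injective_path fun x => (h x).trans' k.lt_succ_self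
    obtain ⟨y, hy, hyw⟩ := exists_mem_notMem_range hw (s := {y | E (w (Fin.last k)) y})
      (by rw [← outDeg_eq_ncard]; exact h _)
    refine ⟨Fin.snoc w y, Fin.snoc_injective_of_injective hw hyw, fun i => ?_⟩
    induction i using Fin.lastCases with
    | last => simpa using hy
    | cast i =>
      rw [Fin.succ_castSucc, Fin.snoc_castSucc, Fin.snoc_castSucc]
      exact hpath i

lemma hasCycle_of_path_of_closing {m : ℕ} {w : Fin (m + 1) → V} (hw : Function.Injective w)
    (hpath : ∀ i : Fin m, E (w i.castSucc) (w i.succ)) {z : V} (hz : z ∉ Set.range w)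
    (hlast : E (w (Fin.last m)) z) (hfirst : E z (w 0)) : HasCycle E (m + 2) := by
  set v : Fin (m + 2) → V := Fin.snoc w z with hv
  suffices h : ∀ i : Fin (m + 2), E (v i) (v (i + 1)) from
    ⟨v, Fin.snoc_injective_of_injective hw hz, h⟩
  intro i
  induction i using Fin.lastCases with
  | last =>
    rw [Fin.last_add_one, ← Fin.castSucc_zero, hv, Fin.snoc_last, Fin.snoc_castSucc]
    exact hfirst
  | cast j =>
    rw [Fin.coeSucc_eq_succ, hv, Fin.snoc_castSucc]
    induction j using Fin.lastCases with
    | last => rw [Fin.succ_last, Fin.snoc_last]; exact hlast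
    | cast k => rw [Fin.succ_castSucc, Fin.snoc_castSucc]; exact hpath k

lemma card_add_le_ncard_inter [Finite V] (s t : Set V) :
    s.ncard + t.ncard ≤ (s ∩ t).ncard + Nat.card V := by
  rw [← Set.ncard_inter_add_ncard_union]
  exact Nat.add_le_add_left (Set.ncard_le_card _) _

theorem hasCycle_of_card_add_le_two_mul_minSemidegree [Finite V] {ℓ : ℕ} (hℓ : 2 ≤ ℓ)
    (h : Nat.card V + ℓ ≤ 2 * minSemidegree E) : HasCycle E ℓ := by
  obtain ⟨m, rfl⟩ : ∃ m, ℓ = m + 2 := ⟨ℓ - 2, by omega⟩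
  have : Nonempty V := by
    by_contra hV
    rw [not_nonempty_iff] at hV
    rw [minSemidegree_of_isEmpty] at h
    omega
  have hcard : minSemidegree E ≤ Nat.card V :=
    (minSemidegree_le_outDeg (Classical.arbitrary V)).trans (Finite.card_subtype_le _)
  obtain ⟨w, hw, hpath⟩ := exists_injective_path (k := m) fun x =>
    (minSemidegree_le_outDeg (E := E) x).trans_lt' (by omega)
  have hclose := card_add_le_ncard_inter {y | E (w (Fin.last m)) y} {y | E y (w 0)}
  rw [← outDeg_eq_ncard, ← inDeg_eq_ncard] at hclose
  have hout := minSemidegree_le_outDeg (E := E) (w (Fin.last m))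
  have hin := minSemidegree_le_inDeg (E := E) (w 0)
  obtain ⟨z, ⟨hlast, hfirst⟩, hz⟩ := exists_mem_notMem_range hw
    (s := {y | E (w (Fin.last m)) y} ∩ {y | E y (w 0)}) (by omega)
  exact hasCycle_of_path_of_closing hw hpath hz hlast hfirst

theorem not_hasCycle_of_odd (c : V → ZMod 2) (hc : ∀ x y, E x y → c y = c x + 1) {ℓ : ℕ}
    (hodd : Odd ℓ) : ¬ HasCycle E ℓ := by
  rintro ⟨v, -, hv⟩
  have hcol : ∀ k : ℕ, c (v k) = c (v 0) + k := by
    intro k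
    induction k with
    | zero => simp
    | succ k ih => rw [Nat.cast_succ, hc _ _ (hv k), ih, Nat.cast_succ, add_assoc]
  have := hcol ℓ
  rw [ZMod.natCast_self, left_eq_add, ZMod.natCast_eq_zero_iff_even] at this
  exact Nat.not_even_iff_odd.mpr hodd this

end Digraph

def halfColoring (n : ℕ) (x : Fin n) : ZMod 2 := if (x : ℕ) < n / 2 then 0 else 1

lemma half_le_card_ne_halfColoring {n : ℕ} (x : Fin n) :
    n / 2 ≤ Nat.card {y // halfColoring n x ≠ halfColoring n y} := by
  classical
  have hlow := Fin.card_filter_val_lt (n := n) (m := n / 2)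
  have hsplit := Finset.card_filter_add_card_filter_not (s := Finset.univ)
    (fun y : Fin n => (y : ℕ) < n / 2)
  rw [Finset.card_univ, Fintype.card_fin, hlow, min_eq_right (Nat.div_le_self n 2)] at hsplit
  rw [Nat.card_eq_fintype_card, Fintype.card_subtype]
  by_cases hx : (x : ℕ) < n / 2 <;>
    simp only [halfColoring, hx, ↓reduceIte, apply_ite, ne_eq, not_lt, zero_ne_one, one_ne_zero,
      not_true_eq_false, not_false_eq_true, if_false_left, if_false_right, and_true] at hsplit ⊢ <;>
    omega

def halfBipartite (n : ℕ) (x y : Fin n) : Prop := halfColoring n x ≠ halfColoring n y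

lemma half_le_minSemidegree_halfBipartite (n : ℕ) : n / 2 ≤ minSemidegree (halfBipartite n) := by
  rcases Nat.eq_zero_or_pos n with rfl | hn
  · exact Nat.zero_le _
  have : Nonempty (Fin n) := ⟨⟨0, hn⟩⟩
  refine le_minSemidegree fun x => ⟨half_le_card_ne_halfColoring x, ?_⟩
  simpa only [inDeg, halfBipartite, ne_comm] using half_le_card_ne_halfColoring x

lemma not_hasCycle_halfBipartite {n ℓ : ℕ} (hodd : Odd ℓ) : ¬ HasCycle (halfBipartite n) ℓ :=
  not_hasCycle_of_odd (halfColoring n) (fun x y hxy => by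
    unfold halfBipartite at hxy
    generalize halfColoring n x = a at hxy
    generalize halfColoring n y = b at hxy
    revert a b; decide) hodd

lemma hasCycle_of_half_add_le_minSemidegree {ℓ n : ℕ} (hℓ : 2 ≤ ℓ) (E : Fin n → Fin n → Prop)
    (h : n / 2 + ℓ ≤ minSemidegree E) : HasCycle E ℓ :=
  hasCycle_of_card_add_le_two_mul_minSemidegree hℓ (by rw [Nat.card_fin]; omega)

lemma deltaDi_le {ℓ : ℕ} (hℓ : 2 ≤ ℓ) (n : ℕ) : deltaDi ℓ n ≤ n / 2 + ℓ :=
  Nat.sInf_le fun E _ => hasCycle_of_half_add_le_minSemidegree hℓ E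

lemma minSemidegree_lt_deltaDi {ℓ n : ℕ} (hℓ : 2 ≤ ℓ) {E : Fin n → Fin n → Prop}
    (hE : ∀ x, ¬ E x x) (hcyc : ¬ HasCycle E ℓ) : minSemidegree E < deltaDi ℓ n := by
  have hmem : deltaDi ℓ n ∈ {d : ℕ | ∀ E : Fin n → Fin n → Prop, (∀ x, ¬ E x x) →
      d ≤ minSemidegree E → HasCycle E ℓ} :=
    Nat.sInf_mem ⟨n / 2 + ℓ, fun E _ => hasCycle_of_half_add_le_minSemidegree hℓ E⟩
  by_contra! h
  exact hcyc (hmem E hE h)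

lemma half_lt_deltaDi {ℓ : ℕ} (hℓ : 2 ≤ ℓ) (hodd : Odd ℓ) (n : ℕ) : n / 2 < deltaDi ℓ n :=
  (half_le_minSemidegree_halfBipartite n).trans_lt <|
    minSemidegree_lt_deltaDi hℓ (fun _ h => h rfl) (not_hasCycle_halfBipartite hodd)

lemma tendsto_div_natCast_of_le_of_le {f : ℕ → ℝ} {a C : ℝ} (hlow : ∀ n : ℕ, a * n ≤ f n)
    (hup : ∀ n : ℕ, f n ≤ a * n + C) : Tendsto (fun n : ℕ => f n / n) atTop (𝓝 a) := by
  have hlim : Tendsto (fun n : ℕ => a + C / n) atTop (𝓝 a) := by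
    simpa using (tendsto_const_div_atTop_nhds_zero_nat C).const_add a
  refine tendsto_of_tendsto_of_tendsto_of_le_of_le' tendsto_const_nhds hlim ?_ ?_ <;>
    filter_upwards [eventually_gt_atTop 0] with n hn <;> have hn' : (0 : ℝ) < n := by positivity
  · rw [le_div_iff₀ hn']; exact hlow n
  · rw [div_le_iff₀ hn', add_mul, div_mul_cancel₀ _ hn'.ne']; exact hup n

theorem digraph_min_degree_odd (ℓ : ℕ) (hℓ : 3 ≤ ℓ) (hodd : Odd ℓ) :
    Filter.Tendsto (fun n => (deltaDi ℓ n : ℝ) / n) Filter.atTop (nhds (1 / 2)) := by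
  have hℓ' : 2 ≤ ℓ := by omega
  refine tendsto_div_natCast_of_le_of_le (C := ℓ) (fun n => ?_) (fun n => ?_)
  · have : n ≤ 2 * deltaDi ℓ n := by have := half_lt_deltaDi hℓ' hodd n; omega
    have : (n : ℝ) ≤ 2 * deltaDi ℓ n := by exact_mod_cast this
    linarith
  · have : (deltaDi ℓ n : ℝ) ≤ (n / 2 : ℕ) + ℓ := by exact_mod_cast deltaDi_le hℓ' n
    linarith [Nat.cast_div_le (m := n) (n := 2) (α := ℝ)]
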